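/- For the quantile check loss function ρ_τ(v) = v(τ - 1{v ≤ 0}), for all real x and y, the Knight identity holds: ρ_τ(x - y) - ρ_τ(x) = -y(τ - 1{x ≤ 0}) + ∫₀^y (1{x ≤ t} - 1{x ≤ 0}) dt. -/
import Mathlib

open intervalIntegral MeasureTheory

noncomputable def rho (τ v : ℝ) : ℝ := v * (τ - if v ≤ 0 then 1 else 0)

lemma step_mono (x : ℝ) : Monotone (fun t : ℝ => if x ≤ t then (1:ℝ) else 0) := by
  intro s t hst
  by_cases h : x ≤ s
  · simp [h, h.trans hst]
  · simp only [if_neg h]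
    split_ifs <;> norm_num

lemma step_ii (x a b : ℝ) :
    IntervalIntegrable (fun t : ℝ => if x ≤ t then (1:ℝ) else 0) volume a b :=
  (step_mono x).intervalIntegrable

lemma step_int_one {x a b : ℝ} (hab : a ≤ b) (hxa : x ≤ a) :
    ∫ t in a..b, (if x ≤ t then (1:ℝ) else 0) = b - a := by
  rw [intervalIntegral.integral_congr (g := fun _ => (1:ℝ))]
  · simp
  · intro t ht
    rw [Set.uIcc_of_le hab] at ht
    simp [hxa.trans ht.1]

lemma step_int_zero {x a b : ℝ} (hab : a ≤ b) (hbx : b ≤ x) :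
    ∫ t in a..b, (if x ≤ t then (1:ℝ) else 0) = 0 := by
  have hx : ∀ᵐ t : ℝ, t ≠ x := by
    rw [MeasureTheory.ae_iff]
    simp [Set.setOf_eq_eq_singleton, Real.volume_singleton]
  rw [intervalIntegral.integral_congr_ae (g := fun _ => (0:ℝ))]
  · simp
  · filter_upwards [hx] with t ht hmem
    rw [Set.uIoc_of_le hab] at hmem
    have : ¬ x ≤ t := fun h => ht (le_antisymm (hmem.2.trans hbx) h)
    simp [this]

lemma step_int (x a b : ℝ) :
    ∫ t in a..b, (if x ≤ t then (1:ℝ) else 0) = max b x - max a x := by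
  have key : ∀ a b : ℝ, a ≤ b →
      ∫ t in a..b, (if x ≤ t then (1:ℝ) else 0) = max b x - max a x := by
    intro a b hab
    rcases le_total x a with hxa | hax
    · rw [step_int_one hab hxa, max_eq_left (hxa.trans hab), max_eq_left hxa]
    · rcases le_total b x with hbx | hxb
      · rw [step_int_zero hab hbx, max_eq_right hbx, max_eq_right hax]
        ring
      · rw [← intervalIntegral.integral_add_adjacent_intervals
            (step_ii x a x) (step_ii x x b),
          step_int_zero hax le_rfl, step_int_one hxb le_rfl,
          max_eq_left hxb, max_eq_right hax]
        ring
  rcases le_total a b with hab | hba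
  · exact key a b hab
  · rw [intervalIntegral.integral_symm, key b a hba]; ring

/-- Knight's identity for the quantile check loss. -/
theorem knight_identity (τ : ℝ) (hτ : τ ∈ Set.Ioo (0:ℝ) 1) (x y : ℝ) :
    rho τ (x - y) - rho τ x =
      -y * (τ - if x ≤ 0 then 1 else 0) +
        ∫ t in (0:ℝ)..y, ((if x ≤ t then (1:ℝ) else 0) - (if x ≤ 0 then 1 else 0)) := by
  rw [intervalIntegral.integral_sub (step_ii x 0 y) (intervalIntegrable_const),
    step_int, intervalIntegral.integral_const]
  simp only [rho, smul_eq_mul, sub_zero]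
  rcases le_total x 0 with hx0 | hx0 <;>
  rcases le_total x y with hxy | hyx <;>
  split_ifs with h1 h2 <;>
  rcases max_cases y x with ⟨m1, hm1⟩ | ⟨m1, hm1⟩ <;>
  rcases max_cases (0:ℝ) x with ⟨m2, hm2⟩ | ⟨m2, hm2⟩ <;>
  rw [m1, m2] <;>
  first | ring1 | linarith
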